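/- arXiv:2507.16078 — 2 statements merged into one kernel-verified Lean document; each statement's English description precedes it below -/
import Mathlib

section
/- Suppose before an automation cost reduction the economy is in the CL regime with L_τ(ρ) = ρ/c and after the reduction to ρ' < ρ < cN the labor allocation is L_τ(ρ') = ρ'/c, with unchanged knowledge stock. Then ΔW = ((ρ-ρ')/c²)·[c(cN - ρ/2 - ρ'/2) + μ(ρ+ρ')/2] > 0. -/
open Real

/-- Welfare change from an automation cost reduction starting from the CL
regime (`L = ρ/c`): `ΔW = ((ρ-ρ')/c²)[c(cN - ρ/2 - ρ'/2) + μ(ρ+ρ')/2] > 0`. -/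
theorem automation_gain_CL (N c μ ρ ρ' qmin k θ : ℝ)
    (hN : 1 < N) (hc : 0 < c) (hμ : 0 < μ)
    (hρ' : 0 < ρ') (hρρ' : ρ' < ρ) (hρN : ρ < c * N) :
    let W : ℝ → ℝ → ℝ := fun L r =>
      qmin + k * Real.Gamma (1 - θ) - r * (N - L) - (c + μ) / 2 * L ^ 2
    W (ρ' / c) ρ' - W (ρ / c) ρ =
        ((ρ - ρ') / c ^ 2) *
          (c * (c * N - ρ / 2 - ρ' / 2) + μ * (ρ + ρ') / 2) ∧
      0 < W (ρ' / c) ρ' - W (ρ / c) ρ := by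
  intro W
  have hc0 : c ≠ 0 := ne_of_gt hc
  have heq : W (ρ' / c) ρ' - W (ρ / c) ρ =
      ((ρ - ρ') / c ^ 2) *
        (c * (c * N - ρ / 2 - ρ' / 2) + μ * (ρ + ρ') / 2) := by
    simp only [W]
    field_simp
    ring
  refine ⟨heq, ?_⟩
  rw [heq]
  have h1 : 0 < (ρ - ρ') / c ^ 2 := div_pos (by linarith) (by positivity)
  have h2 : 0 < c * (c * N - ρ / 2 - ρ' / 2) + μ * (ρ + ρ') / 2 := by
    have : ρ / 2 + ρ' / 2 < c * N := by linarith
    nlinarith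
  exact mul_pos h1 h2
end

section
/- The function k ↦ ρ - (c+μ)(1-ν) + β·θ·k·γ(1-θ, u(k)), where u(k) = ((φ_AI - q_min)/k)^{-1/θ} and γ is the lower incomplete gamma function, is strictly increasing in k > 0, tends to a negative value as k → 0⁺ when ρ < (c+μ)(1-ν), and tends to +∞ as k → ∞; hence it has a unique root k†_AI > 0. -/
open Real Filter Set

/-- The function `k ↦ ρ - (c+μ)(1-ν) + βθk·γ(1-θ, u(k))`, with
`u(k) = (k/(φ_AI - q_min))^(1/θ)` and `γ` the lower incomplete gamma function,
is strictly increasing on `k > 0`, tends to the negative value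
`ρ - (c+μ)(1-ν)` as `k → 0⁺`, tends to `+∞` as `k → ∞`, and hence has a
unique positive root. -/
theorem AI_threshold_exists (c μ β θ ν ρ φAI qmin : ℝ)
    (hc : 0 < c) (hμ : 0 < μ) (hβ : β ∈ Set.Ioo (0:ℝ) 1)
    (hθ : θ ∈ Set.Ioo (0:ℝ) 1) (hν : 0 ≤ ν) (hν1 : ν < 1)
    (hρ : 0 < ρ) (hρb : ρ < (c + μ) * (1 - ν))
    (hφ : qmin < φAI) (hq : 0 < qmin) :
    let γinc : ℝ → ℝ → ℝ := fun s u => ∫ x in (0:ℝ)..u, x ^ (s - 1) * Real.exp (-x)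
    let u : ℝ → ℝ := fun k => (k / (φAI - qmin)) ^ ((1:ℝ) / θ)
    let f : ℝ → ℝ := fun k => ρ - (c + μ) * (1 - ν) + β * θ * k * γinc (1 - θ) (u k)
    StrictMonoOn f (Set.Ioi 0) ∧
      Tendsto f (nhdsWithin 0 (Set.Ioi 0)) (nhds (ρ - (c + μ) * (1 - ν))) ∧
      ρ - (c + μ) * (1 - ν) < 0 ∧
      Tendsto f atTop atTop ∧
      ∃! k : ℝ, k ∈ Set.Ioi (0:ℝ) ∧ f k = 0 := by
  intro γinc u f
  obtain ⟨hβ0, hβ1⟩ := hβ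
  obtain ⟨hθ0, hθ1⟩ := hθ
  set C : ℝ := φAI - qmin with hCdef
  have hC : 0 < C := by simp [hCdef]; linarith
  have hA : ρ - (c + μ) * (1 - ν) < 0 := by linarith
  set g : ℝ → ℝ := fun x => x ^ ((1 - θ) - 1) * Real.exp (-x) with hg
  have hint : ∀ a b : ℝ, IntervalIntegrable g MeasureTheory.volume a b := by
    intro a b
    apply IntervalIntegrable.mul_continuousOn
    · exact intervalIntegral.intervalIntegrable_rpow' (by linarith)
    · exact (Real.continuous_exp.comp continuous_neg).continuousOn
  set G : ℝ → ℝ := fun v => ∫ x in (0:ℝ)..v, g x with hGdef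
  have hGeq : ∀ v, γinc (1 - θ) v = G v := fun v => rfl
  have hGcont : Continuous G := intervalIntegral.continuous_primitive hint 0
  have hGpos : ∀ v, 0 < v → 0 < G v := by
    intro v hv
    apply intervalIntegral.intervalIntegral_pos_of_pos_on (hint 0 v) _ hv
    intro x hx
    exact mul_pos (Real.rpow_pos_of_pos hx.1 _) (Real.exp_pos _)
  have hGmono : ∀ ⦃a b : ℝ⦄, 0 ≤ a → a ≤ b → G a ≤ G b := by
    intro a b ha hab
    have h1 : G b - G a = ∫ x in a..b, g x := by
      rw [hGdef]; dsimp only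
      rw [← intervalIntegral.integral_add_adjacent_intervals (hint 0 a) (hint a b)]
      ring
    have h2 : 0 ≤ ∫ x in a..b, g x := by
      apply intervalIntegral.integral_nonneg hab
      intro x hx
      exact mul_nonneg (Real.rpow_nonneg (le_trans ha hx.1) _) (Real.exp_pos _).le
    linarith
  have hu_pos : ∀ k, 0 < k → 0 < u k := fun k hk => Real.rpow_pos_of_pos (div_pos hk hC) _
  have hu_mono : ∀ ⦃a b : ℝ⦄, 0 ≤ a → a ≤ b → u a ≤ u b := by
    intro a b ha hab
    exact Real.rpow_le_rpow (div_nonneg ha hC.le) (by gcongr) (one_div_nonneg.mpr hθ0.le)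
  have hfeq : ∀ k, f k = ρ - (c + μ) * (1 - ν) + β * θ * k * G (u k) := fun k => rfl
  -- strict monotonicity
  have hfmono : StrictMonoOn f (Set.Ioi 0) := by
    intro a ha b hb hab
    rw [hfeq, hfeq]
    have ha0 : (0:ℝ) < a := ha
    have hb0 : (0:ℝ) < b := hb
    have hGa : 0 < G (u a) := hGpos _ (hu_pos a ha0)
    have hGab : G (u a) ≤ G (u b) := hGmono (hu_pos a ha0).le (hu_mono ha0.le hab.le)
    have h1 : a * G (u a) < b * G (u b) := by
      calc a * G (u a) < b * G (u a) := by nlinarith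
        _ ≤ b * G (u b) := by nlinarith
    have hβθ : 0 < β * θ := mul_pos hβ0 hθ0
    nlinarith [mul_lt_mul_of_pos_left h1 hβθ]
  -- tendsto at 0+
  have hlim0 : Tendsto f (nhdsWithin 0 (Set.Ioi 0)) (nhds (ρ - (c + μ) * (1 - ν))) := by
    have key : Tendsto (fun k => β * θ * k * G (u k)) (nhdsWithin 0 (Set.Ioi 0)) (nhds 0) := by
      have hev : ∀ᶠ k in nhdsWithin 0 (Set.Ioi 0), k ∈ Set.Ioc 0 C :=
        Ioc_mem_nhdsGT_of_mem ⟨le_refl 0, hC⟩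
      apply squeeze_zero'
      · filter_upwards [hev] with k hk
        have h := hGpos _ (hu_pos k hk.1)
        have : 0 ≤ β * θ * k := mul_nonneg (mul_nonneg hβ0.le hθ0.le) hk.1.le
        nlinarith
      · filter_upwards [hev] with k hk
        have hu1 : u k ≤ 1 := by
          apply Real.rpow_le_one (div_nonneg hk.1.le hC.le) _ (one_div_nonneg.mpr hθ0.le)
          exact div_le_one_of_le₀ hk.2 hC.le
        have hle : G (u k) ≤ G 1 := hGmono (hu_pos k hk.1).le hu1
        have hβθk : 0 ≤ β * θ * k := mul_nonneg (mul_nonneg hβ0.le hθ0.le) hk.1.le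
        calc β * θ * k * G (u k) ≤ β * θ * k * G 1 := mul_le_mul_of_nonneg_left hle hβθk
          _ = β * θ * G 1 * k := by ring
      · have : Tendsto (fun k : ℝ => β * θ * G 1 * k) (nhds 0) (nhds (β * θ * G 1 * 0)) :=
          (continuous_const.mul continuous_id).tendsto 0
        simpa using this.mono_left nhdsWithin_le_nhds
    have := key.const_add (ρ - (c + μ) * (1 - ν))
    simp only [add_zero] at this
    refine Tendsto.congr (fun k => ?_) this
    rw [hfeq]
  -- tendsto atTop
  have hG1 : 0 < G 1 := hGpos 1 one_pos
  have hftop : Tendsto f atTop atTop := by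
    have hlin : Tendsto (fun k : ℝ => ρ - (c + μ) * (1 - ν) + β * θ * G 1 * k) atTop atTop := by
      apply tendsto_atTop_add_const_left
      exact Tendsto.const_mul_atTop (mul_pos (mul_pos hβ0 hθ0) hG1) tendsto_id
    apply tendsto_atTop_mono' _ _ hlin
    filter_upwards [eventually_ge_atTop (max C 1)] with k hk
    have hkC : C ≤ k := le_trans (le_max_left _ _) hk
    have hk0 : (0:ℝ) < k := lt_of_lt_of_le hC hkC
    have hu1 : (1:ℝ) ≤ u k :=
      Real.one_le_rpow ((one_le_div hC).mpr hkC) (one_div_nonneg.mpr hθ0.le)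
    have hGk : G 1 ≤ G (u k) := hGmono zero_le_one hu1
    rw [hfeq]
    have h3 : β * θ * k * G 1 ≤ β * θ * k * G (u k) :=
      mul_le_mul_of_nonneg_left hGk (mul_nonneg (mul_nonneg hβ0.le hθ0.le) hk0.le)
    nlinarith [h3]
  refine ⟨hfmono, hlim0, hA, hftop, ?_⟩
  -- existence and uniqueness of root
  have hucont : Continuous u := by
    apply Continuous.rpow_const (continuous_id.div_const C)
    intro k; right; exact one_div_nonneg.mpr hθ0.le
  have hfcont : Continuous f := by
    have : Continuous fun k => ρ - (c + μ) * (1 - ν) + β * θ * k * G (u k) :=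
      continuous_const.add ((continuous_const.mul continuous_id).mul (hGcont.comp hucont))
    exact this.congr fun k => (hfeq k).symm
  obtain ⟨k₀, hk₀neg, hk₀pos⟩ :
      ∃ k₀, f k₀ < 0 ∧ (0:ℝ) < k₀ := by
    have h1 : ∀ᶠ k in nhdsWithin 0 (Set.Ioi 0), f k < 0 :=
      hlim0.eventually_lt_const hA
    have h2 : ∀ᶠ k in nhdsWithin 0 (Set.Ioi 0), (0:ℝ) < k := eventually_mem_nhdsWithin
    exact (h1.and h2).exists
  obtain ⟨k₁, hk₁⟩ := ((hftop.eventually_ge_atTop 1).and (eventually_ge_atTop k₀)).exists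
  have hk01 : k₀ ≤ k₁ := hk₁.2
  have h0mem : (0:ℝ) ∈ Set.Icc (f k₀) (f k₁) := ⟨hk₀neg.le, by linarith [hk₁.1]⟩
  obtain ⟨r, hrmem, hfr⟩ := intermediate_value_Icc hk01 hfcont.continuousOn h0mem
  have hr0 : (0:ℝ) < r := lt_of_lt_of_le hk₀pos hrmem.1
  refine ⟨r, ⟨hr0, hfr⟩, ?_⟩
  rintro y ⟨hy, hfy⟩
  exact hfmono.injOn hy hr0 (by rw [hfy, hfr])
end
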